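/- Let H1, H2 be Hilbert spaces, A ∈ B(H1) nonzero, and V ⊆ B(H2) a subspace. Then Ref_e(A ⊗ V) = A ⊗ Ref V, where A ⊗ V denotes {A ⊗ B : B ∈ V}. -/

import Mathlib

/-!
For fixed `x, y ∈ H2` the sesquilinear form `(ξ, η) ↦ ⟪T (ξ ⊗ x), η ⊗ y⟫` of an operator
`T ∈ Ref_e (A ⊗ V)` vanishes wherever `⟪A ξ, η⟫` does, so it is a multiple of that form.
Normalising `⟪A ξ₀, η₀⟫ = 1`, the multiple is `⟪B x, y⟫` for the slice
`B = (η₀ ⊗ ·)* T (ξ₀ ⊗ ·)`; hence `T = A ⊗ B` by density of the elementary tensors, and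
`B ∈ Ref V` because `T` annihilates every `ξ₀ ⊗ x, η₀ ⊗ y` that `A ⊗ V` annihilates.
-/

noncomputable section

/-- The weak-* closed linear span of a set of operators on a Hilbert space,
described via annihilating (finite sums of) vector functionals; for linear
subspaces this coincides with the weak-* (= weak operator topology) closure. -/
def wspan {E : Type*} [NormedAddCommGroup E] [InnerProductSpace ℂ E]
    (S : Set (E →L[ℂ] E)) : Set (E →L[ℂ] E) :=
  {T | ∀ (n : ℕ) (x y : Fin n → E),
    (∀ A ∈ S, (∑ i, (inner ℂ (A (x i)) (y i) : ℂ)) = 0) →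
      (∑ i, (inner ℂ (T (x i)) (y i) : ℂ)) = 0}

/-- The reflexive hull of a set of operators. -/
def RefHull {E : Type*} [NormedAddCommGroup E] [InnerProductSpace ℂ E]
    (S : Set (E →L[ℂ] E)) : Set (E →L[ℂ] E) :=
  {T | ∀ x y : E, (∀ A ∈ S, (inner ℂ (A x) y : ℂ) = 0) → (inner ℂ (T x) y : ℂ) = 0}

/-- An identification of the Hilbert space `H` with the Hilbert-space tensor
product `H1 ⊗ H2`: a bilinear map on vectors whose range spans a dense subspace,
multiplicative on inner products, together with the induced tensor product of
operators. -/
structure TensorSetup (H1 H2 H : Type*)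
    [NormedAddCommGroup H1] [InnerProductSpace ℂ H1]
    [NormedAddCommGroup H2] [InnerProductSpace ℂ H2]
    [NormedAddCommGroup H] [InnerProductSpace ℂ H] where
  t : H1 →ₗ[ℂ] H2 →ₗ[ℂ] H
  inner_t : ∀ ξ η x y, (inner ℂ (t ξ x) (t η y) : ℂ) = (inner ℂ ξ η : ℂ) * (inner ℂ x y : ℂ)
  dense_t : (Submodule.span ℂ {z | ∃ ξ x, z = t ξ x}).topologicalClosure = ⊤
  top : (H1 →L[ℂ] H1) → (H2 →L[ℂ] H2) → (H →L[ℂ] H)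
  top_apply : ∀ A B ξ x, top A B (t ξ x) = t (A ξ) (B x)

/-- The reflexive hull relative to elementary tensors, `Ref_e`. -/
def RefE {H1 H2 H : Type*} [NormedAddCommGroup H1] [InnerProductSpace ℂ H1]
    [NormedAddCommGroup H2] [InnerProductSpace ℂ H2]
    [NormedAddCommGroup H] [InnerProductSpace ℂ H]
    (ts : TensorSetup H1 H2 H) (S : Set (H →L[ℂ] H)) : Set (H →L[ℂ] H) :=
  {T | ∀ (ξ η : H1) (x y : H2),
    (∀ A ∈ S, (inner ℂ (A (ts.t ξ x)) (ts.t η y) : ℂ) = 0) →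
      (inner ℂ (T (ts.t ξ x)) (ts.t η y) : ℂ) = 0}

section Sesquilinear

variable {𝕜 M N : Type*} [Field 𝕜] [AddCommGroup M] [Module 𝕜 M] [AddCommGroup N] [Module 𝕜 N]
  {σ : 𝕜 →+* 𝕜} [RingHomSurjective σ]

theorem LinearMap.apply_mul_eq_of_ker_le {f g : M →ₛₗ[σ] 𝕜} (h : LinearMap.ker f ≤ LinearMap.ker g)
    {m₁ : M} (hm₁ : f m₁ ≠ 0) (m : M) : g m * f m₁ = f m * g m₁ := by
  obtain ⟨a, ha⟩ := σ.surjective (f m / f m₁)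
  have hker : f (m - a • m₁) = 0 := by
    rw [map_sub, map_smulₛₗ, ha, smul_eq_mul, div_mul_cancel₀ _ hm₁, sub_self]
  have := h hker
  rw [LinearMap.mem_ker, map_sub, map_smulₛₗ, ha, sub_eq_zero, smul_eq_mul] at this
  rw [this]; field_simp

-- Each row `F m` is proportional to `K m`; the column through `n₀` fixes the constant, and a
-- row with `K m n₀ = 0` is the difference of the rows of `m + m₀` and `m₀`.
theorem LinearMap.eq_smul_of_apply_eq_zero_imp {K F : M →ₛₗ[σ] N →ₗ[𝕜] 𝕜}
    (h : ∀ m n, K m n = 0 → F m n = 0) {m₀ : M} {n₀ : N} (h₀ : K m₀ n₀ = 1) :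
    F = F m₀ n₀ • K := by
  have col (m : M) : F m n₀ = F m₀ n₀ * K m n₀ := by
    simpa [h₀, mul_comm] using
      (K.flip n₀).apply_mul_eq_of_ker_le (g := F.flip n₀) (fun m hm => h m n₀ hm) (m₁ := m₀)
        (by simp [h₀]) m
  have row (m : M) (hm : K m n₀ ≠ 0) (n : N) : F m n = F m₀ n₀ * K m n := by
    have := (K m).apply_mul_eq_of_ker_le (g := F m) (fun n hn => h m n hn) hm n
    rw [col] at this
    exact mul_right_cancel₀ hm (by rw [this]; ring)
  ext m n
  by_cases hm : K m n₀ = 0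
  · have hsum : K (m + m₀) n₀ ≠ 0 := by simp [hm, h₀]
    have := row (m + m₀) hsum n
    simp only [map_add, LinearMap.add_apply, row m₀ (by simp [h₀]) n] at this
    simpa using (add_right_cancel (this.trans (mul_add _ _ _)))
  · simpa using row m hm n

end Sesquilinear

theorem ContinuousLinearMap.exists_inner_apply_eq_one {𝕜 E F : Type*} [RCLike 𝕜]
    [NormedAddCommGroup E] [InnerProductSpace 𝕜 E] [NormedAddCommGroup F] [InnerProductSpace 𝕜 F]
    {A : E →L[𝕜] F} (hA : A ≠ 0) : ∃ ξ η, (inner 𝕜 (A ξ) η : 𝕜) = 1 := by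
  obtain ⟨ξ, hξ⟩ : ∃ ξ, A ξ ≠ 0 := by
    by_contra! h
    exact hA (ContinuousLinearMap.ext h)
  exact ⟨ξ, (inner 𝕜 (A ξ) (A ξ))⁻¹ • A ξ, by
    rw [inner_smul_right, inv_mul_cancel₀ (inner_self_ne_zero.mpr hξ)]⟩

namespace TensorSetup

variable {H1 H2 H : Type*}
  [NormedAddCommGroup H1] [InnerProductSpace ℂ H1]
  [NormedAddCommGroup H2] [InnerProductSpace ℂ H2]
  [NormedAddCommGroup H] [InnerProductSpace ℂ H]
  (ts : TensorSetup H1 H2 H) {A : H1 →L[ℂ] H1} {V : Set (H2 →L[ℂ] H2)} {T : H →L[ℂ] H}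

theorem norm_t (ξ : H1) (x : H2) : ‖ts.t ξ x‖ = ‖ξ‖ * ‖x‖ := by
  have h := ts.inner_t ξ ξ x x
  simp only [inner_self_eq_norm_sq_to_K] at h
  rw [← mul_pow] at h
  exact (pow_left_inj₀ (norm_nonneg _) (by positivity) two_ne_zero).mp (by exact_mod_cast h)

def tCLM : H1 →L[ℂ] H2 →L[ℂ] H :=
  ts.t.mkContinuous₂ 1 fun ξ x => by rw [norm_t, one_mul]

@[simp]
theorem tCLM_apply (ξ : H1) (x : H2) : ts.tCLM ξ x = ts.t ξ x := rfl

theorem dense_span_t : Dense (Submodule.span ℂ {z | ∃ ξ x, z = ts.t ξ x} : Set H) :=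
  Submodule.dense_iff_topologicalClosure_eq_top.mpr ts.dense_t

theorem eq_of_inner_t {u v : H} (h : ∀ η y, (inner ℂ u (ts.t η y) : ℂ) = inner ℂ v (ts.t η y)) :
    u = v := by
  have : innerSL ℂ u = innerSL ℂ v :=
    ContinuousLinearMap.ext_on ts.dense_span_t (by rintro _ ⟨η, y, rfl⟩; exact h η y)
  exact ext_inner_right ℂ fun w => congr($this w)

theorem ext_inner_t {S T : H →L[ℂ] H}
    (h : ∀ ξ x η y, (inner ℂ (S (ts.t ξ x)) (ts.t η y) : ℂ) = inner ℂ (T (ts.t ξ x)) (ts.t η y)) :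
    S = T :=
  ContinuousLinearMap.ext_on ts.dense_span_t <| by
    rintro _ ⟨ξ, x, rfl⟩; exact ts.eq_of_inner_t (h ξ x)

theorem inner_top_apply (B : H2 →L[ℂ] H2) (ξ η : H1) (x y : H2) :
    (inner ℂ (ts.top A B (ts.t ξ x)) (ts.t η y) : ℂ) = inner ℂ (A ξ) η * inner ℂ (B x) y := by
  rw [top_apply, inner_t]

theorem top_mem_refE {B : H2 →L[ℂ] H2} (hB : B ∈ RefHull V) :
    ts.top A B ∈ RefE ts {X | ∃ B ∈ V, X = ts.top A B} := by
  intro ξ η x y hxy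
  rw [inner_top_apply]
  by_cases hA : (inner ℂ (A ξ) η : ℂ) = 0
  · rw [hA, zero_mul]
  refine mul_eq_zero_of_right _ (hB x y fun B' hB' => ?_)
  have := hxy _ ⟨B', hB', rfl⟩
  rwa [inner_top_apply, mul_eq_zero, or_iff_right hA] at this

-- One-dimensional subspaces are reflexive, applied to `(ξ, η) ↦ ⟪T (ξ ⊗ x), η ⊗ y⟫`.
theorem inner_apply_t_eq_of_mem_refE (hT : T ∈ RefE ts {X | ∃ B ∈ V, X = ts.top A B})
    {ξ₀ η₀ : H1} (h₀ : (inner ℂ (A ξ₀) η₀ : ℂ) = 1) (ξ η : H1) (x y : H2) :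
    (inner ℂ (T (ts.t ξ x)) (ts.t η y) : ℂ) =
      inner ℂ (T (ts.t ξ₀ x)) (ts.t η₀ y) * inner ℂ (A ξ) η := by
  let K := innerₛₗ ℂ ∘ₛₗ (A : H1 →ₗ[ℂ] H1)
  let F := (innerₛₗ ℂ ∘ₛₗ ((T : H →ₗ[ℂ] H) ∘ₗ ts.t.flip x)).compl₂ (ts.t.flip y)
  have hKF : ∀ ξ η, K ξ η = 0 → F ξ η = 0 := fun ξ η hK =>
    hT ξ η x y fun _ ⟨B, _, hB⟩ => by
      rw [hB, inner_top_apply]; exact mul_eq_zero_of_left hK _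
  exact congr($(LinearMap.eq_smul_of_apply_eq_zero_imp hKF (m₀ := ξ₀) (n₀ := η₀) h₀) ξ η)

variable [CompleteSpace H2] [CompleteSpace H]

def slice (ξ η : H1) (T : H →L[ℂ] H) : H2 →L[ℂ] H2 :=
  (ts.tCLM η).adjoint ∘L T ∘L ts.tCLM ξ

theorem inner_slice_apply (ξ η : H1) (T : H →L[ℂ] H) (x y : H2) :
    (inner ℂ (ts.slice ξ η T x) y : ℂ) = inner ℂ (T (ts.t ξ x)) (ts.t η y) := by
  simp [slice, ContinuousLinearMap.adjoint_inner_left]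

theorem slice_mem_refHull (hT : T ∈ RefE ts {X | ∃ B ∈ V, X = ts.top A B}) (ξ₀ η₀ : H1) :
    ts.slice ξ₀ η₀ T ∈ RefHull V := by
  intro x y hxy
  rw [inner_slice_apply]
  exact hT ξ₀ η₀ x y fun _ ⟨B, hB, hX⟩ => by rw [hX, inner_top_apply, hxy B hB, mul_zero]

theorem eq_top_slice_of_mem_refE (hT : T ∈ RefE ts {X | ∃ B ∈ V, X = ts.top A B})
    {ξ₀ η₀ : H1} (h₀ : (inner ℂ (A ξ₀) η₀ : ℂ) = 1) : T = ts.top A (ts.slice ξ₀ η₀ T) :=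
  ts.ext_inner_t fun ξ x η y => by
    rw [inner_top_apply, inner_slice_apply, ts.inner_apply_t_eq_of_mem_refE hT h₀, mul_comm]

end TensorSetup

variable {H1 H2 H : Type*}
  [NormedAddCommGroup H1] [InnerProductSpace ℂ H1] [CompleteSpace H1]
  [NormedAddCommGroup H2] [InnerProductSpace ℂ H2] [CompleteSpace H2]
  [NormedAddCommGroup H] [InnerProductSpace ℂ H] [CompleteSpace H]

/-- For a nonzero `A ∈ B(H1)` and a subspace `V ⊆ B(H2)`,
`Ref_e (A ⊗ V) = A ⊗ Ref V`, where `A ⊗ V = {A ⊗ B : B ∈ V}`. -/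
theorem stmt3_refE_singleton_tensor
    (ts : TensorSetup H1 H2 H)
    (A : H1 →L[ℂ] H1) (hA : A ≠ 0)
    (V : Submodule ℂ (H2 →L[ℂ] H2)) :
    RefE ts {X | ∃ B ∈ V, X = ts.top A B} =
      {X | ∃ B ∈ RefHull (V : Set (H2 →L[ℂ] H2)), X = ts.top A B} := by
  obtain ⟨ξ₀, η₀, h₀⟩ := A.exists_inner_apply_eq_one hA
  ext T
  constructor
  · intro hT
    exact ⟨ts.slice ξ₀ η₀ T, ts.slice_mem_refHull hT ξ₀ η₀, ts.eq_top_slice_of_mem_refE hT h₀⟩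
  · rintro ⟨B, hB, rfl⟩
    exact ts.top_mem_refE hB
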